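/- arXiv:2511.14067 — 6 statements merged into one kernel-verified Lean document; each statement's English description precedes it below -/
import Mathlib

section
/- Over a fixed finite vertex set V, if ⟨E, C^WW, C^WR⟩ ↪* ⟨E_p, C^WW_p, C^WR_p⟩ in the pruning transition system, then the hyper-polygraph (V, E, (C^WW, C^WR)) is SER-acyclic if and only if the hyper-polygraph (V, E_p, (C^WW_p, C^WR_p)) is SER-acyclic. -/
namespace DBIso

/-! ### Operations, transactions and histories -/

/-- An operation: a read `R(x,v)` or a write `W(x,v)` on key `x` with value `v`. -/
inductive Op (Key Val : Type) where
  | read  (k : Key) (v : Val)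
  | write (k : Key) (v : Val)

variable {Key Val : Type}

/-- The key accessed by an operation. -/
def Op.key : Op Key Val → Key
  | .read k _ => k
  | .write k _ => k

/-- The value read or written by an operation. -/
def Op.val : Op Key Val → Val
  | .read _ w => w
  | .write _ w => w

/-- A transaction: a finite nonempty set of (identified) operations together with
a strict total order on them (the program order), modelled as a nonempty list of
operations tagged by pairwise distinct operation identifiers; the list order is
the program order `po`. -/
structure Txn (Key Val : Type) where
  ops : List (ℕ × Op Key Val)
  ops_nonempty : ops ≠ []
  ids_nodup : (ops.map Prod.fst).Nodup

/-- The operation of `T` at position `i` (in program order). -/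
def Txn.opAt (T : Txn Key Val) (i : Fin T.ops.length) : Op Key Val :=
  (T.ops.get i).2

/-- `T ⊢ W(x,v)`: `T` writes to key `x` and `v` is the po-last value it writes to `x`. -/
def Txn.FWrites (T : Txn Key Val) (x : Key) (v : Val) : Prop :=
  ∃ i : Fin T.ops.length, T.opAt i = Op.write x v ∧
    ∀ j : Fin T.ops.length, i < j → ∀ w : Val, T.opAt j ≠ Op.write x w

/-- `T ∈ WriteTx_x` : `T` writes to key `x`. -/
def Txn.WritesKey (T : Txn Key Val) (x : Key) : Prop :=
  ∃ v : Val, T.FWrites x v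

/-- `T ⊢ R(x,v)`: `T` reads `x` before writing to it and `v` is the value returned
by the po-first such read (equivalently, the po-first operation of `T` on `x` is a
read returning `v`). -/
def Txn.FReads (T : Txn Key Val) (x : Key) (v : Val) : Prop :=
  ∃ i : Fin T.ops.length, T.opAt i = Op.read x v ∧
    ∀ j : Fin T.ops.length, j < i → (T.opAt j).key ≠ x

/-- Internal consistency of a transaction: every read of a key `x` that is po-preceded
by an operation on `x` returns the value of the po-latest preceding operation on `x`. -/
def Txn.Internal (T : Txn Key Val) : Prop :=
  ∀ i j : Fin T.ops.length, j < i → ∀ (x : Key) (v : Val),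
    T.opAt i = Op.read x v → (T.opAt j).key = x →
    (∀ k : Fin T.ops.length, j < k → k < i → (T.opAt k).key ≠ x) →
    (T.opAt j).val = v

/-- A history: a finite set of transactions with pairwise disjoint operation sets,
together with the session order `SO` (a union of strict total orders on the disjoint
subsets, given by `sess`, partitioning the transactions), and a distinguished initial
transaction `init` (`T_⊥`) writing to every key and `SO`-preceding every other
transaction. -/
structure History (Key Val : Type) where
  txns : Set (Txn Key Val)
  txns_finite : txns.Finite
  SO : Txn Key Val → Txn Key Val → Prop
  sess : Txn Key Val → ℕ
  init : Txn Key Val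
  ops_disjoint : ∀ T ∈ txns, ∀ S ∈ txns, T ≠ S →
      ∀ i ∈ T.ops.map Prod.fst, i ∉ S.ops.map Prod.fst
  so_mem : ∀ T S, SO T S → T ∈ txns ∧ S ∈ txns
  so_irrefl : ∀ T, ¬ SO T T
  so_trans : ∀ T S U, SO T S → SO S U → SO T U
  so_total_sess : ∀ T ∈ txns, ∀ S ∈ txns, T ≠ S → sess T = sess S → SO T S ∨ SO S T
  so_sess : ∀ T S, SO T S → sess T = sess S ∨ T = init
  init_mem : init ∈ txns
  init_writes : ∀ x : Key, ∃ v : Val, init.FWrites x v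
  init_so : ∀ T ∈ txns, T ≠ init → SO init T

/-- `H ⊨ Int`: every transaction of `H` is internally consistent. -/
def History.SatInt (H : History Key Val) : Prop :=
  ∀ T ∈ H.txns, T.Internal

/-- `r` is a strict total order on the set `s`. -/
def IsStrictTotalOrderOn {α : Type*} (s : Set α) (r : α → α → Prop) : Prop :=
  (∀ a b, r a b → a ∈ s ∧ b ∈ s) ∧
  (∀ a, ¬ r a a) ∧
  (∀ a b c, r a b → r b c → r a c) ∧
  (∀ a ∈ s, ∀ b ∈ s, a ≠ b → r a b ∨ r b a)

/-- `H` satisfies SER: `H ⊨ Int` and there is a strict total order `co` on the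
transactions of `H` extending `SO` such that every read `S ⊢ R(x,v)` reads the
value written by the `co`-greatest `co`-predecessor of `S` writing `x`. -/
def History.SatSER (H : History Key Val) : Prop :=
  H.SatInt ∧
  ∃ co : Txn Key Val → Txn Key Val → Prop,
    IsStrictTotalOrderOn H.txns co ∧
    (∀ T S, H.SO T S → co T S) ∧
    ∀ S ∈ H.txns, ∀ (x : Key) (v : Val), S.FReads x v →
      ∃ T', co T' S ∧ T'.WritesKey x ∧
        (∀ T, co T S → T.WritesKey x → T = T' ∨ co T T') ∧
        T'.FWrites x v

/-! ### Dependency graphs -/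

/-- `(WR, WW, RW)` extend the history `H` to a dependency graph. -/
def IsDepGraph (H : History Key Val)
    (WR WW RW : Key → Txn Key Val → Txn Key Val → Prop) : Prop :=
  (∀ (x : Key) (T S : Txn Key Val), WR x T S → T ∈ H.txns ∧ S ∈ H.txns) ∧
  (∀ x : Key, ∀ S ∈ H.txns, (∃ v, S.FReads x v) → ∃! T, WR x T S) ∧
  (∀ (x : Key) (T S : Txn Key Val), WR x T S →
      T ≠ S ∧ ∃ v, T.FWrites x v ∧ S.FReads x v) ∧
  (∀ x : Key, IsStrictTotalOrderOn {T | T ∈ H.txns ∧ T.WritesKey x} (WW x)) ∧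
  (∀ (x : Key) (T S : Txn Key Val),
      RW x T S ↔ T ≠ S ∧ ∃ T', WR x T' T ∧ WW x T' S)

/-- A binary relation is acyclic iff its transitive closure is irreflexive. -/
def RelAcyclic {α : Type*} (r : α → α → Prop) : Prop :=
  ∀ a, ¬ Relation.TransGen r a a

/-- The union `SO ∪ WR ∪ WW ∪ RW` as a binary relation on transactions. -/
def DepUnion (H : History Key Val)
    (WR WW RW : Key → Txn Key Val → Txn Key Val → Prop) :
    Txn Key Val → Txn Key Val → Prop :=
  fun T S => H.SO T S ∨ (∃ x, WR x T S) ∨ (∃ x, WW x T S) ∨ (∃ x, RW x T S)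

/-- The relation `(SO ∪ WR ∪ WW) ; RW?`. -/
def SIRel (H : History Key Val)
    (WR WW RW : Key → Txn Key Val → Txn Key Val → Prop) :
    Txn Key Val → Txn Key Val → Prop :=
  fun T S => ∃ U, (H.SO T U ∨ (∃ x, WR x T U) ∨ (∃ x, WW x T U)) ∧
    (U = S ∨ ∃ x, RW x U S)

/-- `H` satisfies SI: `H ⊨ Int` and there exist `WR, WW, RW` extending `H` to a
dependency graph with `(SO ∪ WR ∪ WW) ; RW?` acyclic. -/
def History.SatSI (H : History Key Val) : Prop :=
  H.SatInt ∧ ∃ WR WW RW, IsDepGraph H WR WW RW ∧ RelAcyclic (SIRel H WR WW RW)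

/-! ### Labeled edges and hyper-polygraphs -/

/-- Dependency edge labels. -/
inductive DepLbl (Key : Type) where
  | SO
  | WR (x : Key)
  | WW (x : Key)
  | RW (x : Key)

/-- A directed labeled edge. -/
structure LEdge (V L : Type) where
  src : V
  dst : V
  lbl : L

variable {V L : Type}

abbrev DepEdge (V Key : Type) := LEdge V (DepLbl Key)
abbrev DepEdgeSet (V Key : Type) := Set (DepEdge V Key)

/-- There is an edge of `E` from `a` to `b`. -/
def EStep (E : Set (LEdge V L)) (a b : V) : Prop := ∃ l, LEdge.mk a b l ∈ E

/-- A set of labeled edges is cyclic iff some vertex has a nonempty edge path to itself. -/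
def EdgeCyclic (E : Set (LEdge V L)) : Prop := ∃ a, Relation.TransGen (EStep E) a a

/-- `a ⤳ b`: there is a (possibly empty) edge path of `E` from `a` to `b`. -/
def EReach (E : Set (LEdge V L)) (a b : V) : Prop := Relation.ReflTransGen (EStep E) a b

/-- A hyper-polygraph over the vertex type `V`: a known edge set `E` together with
the constraint collections `C^WW` and `C^WR`. -/
structure HyperPolygraph (V Key : Type) where
  E : DepEdgeSet V Key
  CWW : Set (DepEdgeSet V Key)
  CWR : Set (DepEdgeSet V Key)

/-- A directed labeled graph (given by its edge set `E'` over the same vertex set)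
is compatible with the hyper-polygraph `G`. -/
def Compatible (G : HyperPolygraph V Key) (E' : DepEdgeSet V Key) : Prop :=
  G.E ⊆ E' ∧
  (∀ (x : Key) (T T' S : V), T ≠ S →
      LEdge.mk T' T (DepLbl.WR x) ∈ E' → LEdge.mk T' S (DepLbl.WW x) ∈ E' →
      LEdge.mk T S (DepLbl.RW x) ∈ E') ∧
  (∀ C ∈ G.CWW ∪ G.CWR, ∃! e, e ∈ E' ∧ e ∈ C)

/-- A hyper-polygraph is SER-acyclic iff some acyclic graph is compatible with it. -/
def SERAcyclic (G : HyperPolygraph V Key) : Prop :=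
  ∃ E', Compatible G E' ∧ ¬ EdgeCyclic E'

/-- The vertex set of the hyper-polygraph of a history: its transactions. -/
abbrev History.Vert (H : History Key Val) : Type := {T : Txn Key Val // T ∈ H.txns}

/-- The hyper-polygraph of a history `H`. -/
def History.hpg (H : History Key Val) : HyperPolygraph H.Vert Key where
  E := {e | (e.lbl = DepLbl.SO ∧ H.SO e.src.1 e.dst.1) ∨
        (∃ (x : Key) (v : Val), e.lbl = DepLbl.WR x ∧
          e.dst.1.FReads x v ∧ e.src.1.FWrites x v ∧ e.src ≠ e.dst ∧
          (∀ T : H.Vert, T.1.FWrites x v → T ≠ e.dst → T = e.src))}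
  CWW := {C | ∃ (x : Key) (T S : H.Vert), T ≠ S ∧
        T.1.WritesKey x ∧ S.1.WritesKey x ∧
        C = {LEdge.mk T S (DepLbl.WW x), LEdge.mk S T (DepLbl.WW x)}}
  CWR := {C | ∃ (x : Key) (S : H.Vert) (v : Val), S.1.FReads x v ∧
        C = {e | ∃ T : H.Vert, T.1.FWrites x v ∧ T ≠ S ∧ e = LEdge.mk T S (DepLbl.WR x)}}

/-- The induced SI graph of a directed labeled graph:
`(E'_SO ∪ E'_WR ∪ E'_WW) ; (E'_RW)?`. -/
def InducedSI (E' : DepEdgeSet V Key) : V → V → Prop :=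
  fun a b => ∃ c : V,
    (LEdge.mk a c DepLbl.SO ∈ E' ∨ (∃ x, LEdge.mk a c (DepLbl.WR x) ∈ E') ∨
      (∃ x, LEdge.mk a c (DepLbl.WW x) ∈ E')) ∧
    (c = b ∨ ∃ x, LEdge.mk c b (DepLbl.RW x) ∈ E')

/-! ### Commit-order hyper-polygraphs -/

/-- Labels for commit-order hyper-polygraphs. -/
inductive COLbl (Key : Type) where
  | SO
  | WR (x : Key)
  | CO

abbrev COEdge (V Key : Type) := LEdge V (COLbl Key)

/-- A commit-order hyper-polygraph. -/
structure COHyperPolygraph (V Key : Type) where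
  E : Set (COEdge V Key)
  CCO : Set (Set (COEdge V Key))
  CWR : Set (Set (COEdge V Key))

/-- The commit-order hyper-polygraph of a history `H`. -/
def History.cohpg (H : History Key Val) : COHyperPolygraph H.Vert Key where
  E := {e | (e.lbl = COLbl.SO ∧ H.SO e.src.1 e.dst.1) ∨
        (∃ (x : Key) (v : Val), e.lbl = COLbl.WR x ∧
          e.dst.1.FReads x v ∧ e.src.1.FWrites x v ∧ e.src ≠ e.dst ∧
          (∀ T : H.Vert, T.1.FWrites x v → T ≠ e.dst → T = e.src))}
  CCO := {C | ∃ T S : H.Vert, T ≠ S ∧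
        C = {LEdge.mk T S COLbl.CO, LEdge.mk S T COLbl.CO}}
  CWR := {C | ∃ (x : Key) (S : H.Vert) (v : Val), S.1.FReads x v ∧
        C = {e | ∃ T : H.Vert, T.1.FWrites x v ∧ T ≠ S ∧ e = LEdge.mk T S (COLbl.WR x)}}

/-- A directed labeled graph (given by its edge set `E'`) is SER-compatible with the
commit-order hyper-polygraph of the history `H`. -/
def SERCompatible (H : History Key Val) (E' : Set (COEdge H.Vert Key)) : Prop :=
  H.cohpg.E ⊆ E' ∧
  (∀ C ∈ H.cohpg.CCO ∪ H.cohpg.CWR, ∃! e, e ∈ E' ∧ e ∈ C) ∧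
  (∀ (x : Key) (T₁ T₂ T₃ : H.Vert), T₁ ≠ T₂ →
      LEdge.mk T₁ T₃ (COLbl.WR x) ∈ E' → T₂.1.WritesKey x →
      LEdge.mk T₂ T₃ COLbl.CO ∈ E' → LEdge.mk T₂ T₁ COLbl.CO ∈ E')

/-- The read-from conditions of a dependency graph on a family `WR`. -/
def ReadFromConds (H : History Key Val)
    (WR : Key → Txn Key Val → Txn Key Val → Prop) : Prop :=
  (∀ (x : Key) (T S : Txn Key Val), WR x T S → T ∈ H.txns ∧ S ∈ H.txns) ∧
  (∀ x : Key, ∀ S ∈ H.txns, (∃ v, S.FReads x v) → ∃! T, WR x T S) ∧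
  (∀ (x : Key) (T S : Txn Key Val), WR x T S →
      T ≠ S ∧ ∃ v, T.FWrites x v ∧ S.FReads x v)

/-! ### The pruning transition system -/

/-- `{(S,T',RW,x) : (T,S,WR,x) ∈ E, S ≠ T'}`: the RW edges derived from the WW edge
`(T,T',WW,x)` and the WR edges of `E`. -/
def DerivedRWofWW (E : DepEdgeSet V Key) (T T' : V) (x : Key) : DepEdgeSet V Key :=
  {e | ∃ S : V, LEdge.mk T S (DepLbl.WR x) ∈ E ∧ S ≠ T' ∧
      e = LEdge.mk S T' (DepLbl.RW x)}

/-- `{(S,T',RW,x) : (T,T',WW,x) ∈ E, S ≠ T'}`: the RW edges derived from the WR edge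
`(T,S,WR,x)` and the WW edges of `E`. -/
def DerivedRWofWR (E : DepEdgeSet V Key) (T S : V) (x : Key) : DepEdgeSet V Key :=
  {e | ∃ T' : V, LEdge.mk T T' (DepLbl.WW x) ∈ E ∧ S ≠ T' ∧
      e = LEdge.mk S T' (DepLbl.RW x)}

/-- States of the pruning transition system: a triple `⟨E, C^WW, C^WR⟩` or the
terminal state `S#` (`bad`). -/
inductive PState (V Key : Type) where
  | node (E : DepEdgeSet V Key) (CWW CWR : Set (DepEdgeSet V Key)) : PState V Key
  | bad : PState V Key

/-- The pruning transition relation `↪`. -/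
inductive PruneStep : PState V Key → PState V Key → Prop where
  | noChoice {E : DepEdgeSet V Key} {CWW CWR : Set (DepEdgeSet V Key)}
      (h : (∅ : DepEdgeSet V Key) ∈ CWW ∪ CWR) :
      PruneStep (.node E CWW CWR) .bad
  | cyc {E : DepEdgeSet V Key} {CWW CWR : Set (DepEdgeSet V Key)}
      (h : EdgeCyclic E) :
      PruneStep (.node E CWW CWR) .bad
  | wwElim {E : DepEdgeSet V Key} {CWW CWR : Set (DepEdgeSet V Key)}
      {cons : DepEdgeSet V Key} {T T' : V} {x : Key}
      (hc : cons ∈ CWW) (he : LEdge.mk T T' (DepLbl.WW x) ∈ cons)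
      (hcyc : EdgeCyclic (E ∪ {LEdge.mk T T' (DepLbl.WW x)} ∪ DerivedRWofWW E T T' x)) :
      PruneStep (.node E CWW CWR)
        (.node E ((CWW \ {cons}) ∪ {cons \ {LEdge.mk T T' (DepLbl.WW x)}}) CWR)
  | wrElim {E : DepEdgeSet V Key} {CWW CWR : Set (DepEdgeSet V Key)}
      {cons : DepEdgeSet V Key} {T S : V} {x : Key}
      (hc : cons ∈ CWR) (he : LEdge.mk T S (DepLbl.WR x) ∈ cons)
      (hcyc : EdgeCyclic (E ∪ {LEdge.mk T S (DepLbl.WR x)} ∪ DerivedRWofWR E T S x)) :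
      PruneStep (.node E CWW CWR)
        (.node E CWW ((CWR \ {cons}) ∪ {cons \ {LEdge.mk T S (DepLbl.WR x)}}))
  | wwIntro {E : DepEdgeSet V Key} {CWW CWR : Set (DepEdgeSet V Key)}
      {T T' : V} {x : Key}
      (hc : ({LEdge.mk T T' (DepLbl.WW x)} : DepEdgeSet V Key) ∈ CWW) :
      PruneStep (.node E CWW CWR)
        (.node (E ∪ {LEdge.mk T T' (DepLbl.WW x)} ∪ DerivedRWofWW E T T' x)
          (CWW \ {{LEdge.mk T T' (DepLbl.WW x)}}) CWR)
  | wrIntro {E : DepEdgeSet V Key} {CWW CWR : Set (DepEdgeSet V Key)}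
      {T S : V} {x : Key}
      (hc : ({LEdge.mk T S (DepLbl.WR x)} : DepEdgeSet V Key) ∈ CWR) :
      PruneStep (.node E CWW CWR)
        (.node (E ∪ {LEdge.mk T S (DepLbl.WR x)} ∪ DerivedRWofWR E T S x)
          CWW (CWR \ {{LEdge.mk T S (DepLbl.WR x)}}))

/-! ### Boolean encoding -/

/-- The edges occurring in some constraint of `G` (i.e. the edges carrying a
Boolean variable, besides the RW variables). -/
def ConsEdges (G : HyperPolygraph V Key) : DepEdgeSet V Key :=
  ⋃₀ (G.CWW ∪ G.CWR)

/-- The truth value, under the assignment `α`, of the literal associated with an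
edge: the constant true if the edge lies in `G.E`, and its variable's value
otherwise. -/
def EdgeVal (G : HyperPolygraph V Key) (α : DepEdge V Key → Prop)
    (e : DepEdge V Key) : Prop :=
  e ∈ G.E ∨ α e

/-- `α` satisfies the Boolean encoding `Φ_G` of the hyper-polygraph `G`. -/
def SatPhi (G : HyperPolygraph V Key) (α : DepEdge V Key → Prop) : Prop :=
  (∀ C ∈ G.CWW ∪ G.CWR, ∃ e ∈ C, α e) ∧
  (∀ C ∈ G.CWW ∪ G.CWR, ∀ e ∈ C, ∀ e' ∈ C, e ≠ e' → ¬(α e ∧ α e')) ∧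
  (∀ (x : Key) (T T' S : V), S ≠ T' →
      (LEdge.mk T T' (DepLbl.WW x) ∈ G.E ∨ LEdge.mk T T' (DepLbl.WW x) ∈ ConsEdges G) →
      (LEdge.mk T S (DepLbl.WR x) ∈ G.E ∨ LEdge.mk T S (DepLbl.WR x) ∈ ConsEdges G) →
      EdgeVal G α (LEdge.mk T T' (DepLbl.WW x)) →
      EdgeVal G α (LEdge.mk T S (DepLbl.WR x)) →
      α (LEdge.mk S T' (DepLbl.RW x)))

/-- The graph induced by the assignment `α`: `G.E` together with all constraint
edges and RW edges whose variables `α` sets to true. -/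
def InducedOf (G : HyperPolygraph V Key) (α : DepEdge V Key → Prop) :
    DepEdgeSet V Key :=
  G.E ∪ {e | e ∈ ConsEdges G ∧ α e} ∪
    {e | (∃ (x : Key) (S T' : V), S ≠ T' ∧ e = LEdge.mk S T' (DepLbl.RW x)) ∧ α e}

/-- `α` satisfies all 2-width-cycle clauses of `G`. -/
def SatPairClauses (G : HyperPolygraph V Key) (α : DepEdge V Key → Prop) : Prop :=
  (∀ e₁ e₂ : DepEdge V Key, e₁ ∈ ConsEdges G → e₂ ∈ ConsEdges G → e₁ ≠ e₂ →
      EReach G.E e₁.dst e₂.src → EReach G.E e₂.dst e₁.src → ¬(α e₁ ∧ α e₂)) ∧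
  (∀ (x : Key) (T T' S : V), T' ≠ T → T' ≠ S → EReach G.E T' S →
      LEdge.mk T T' (DepLbl.WW x) ∈ ConsEdges G →
      LEdge.mk T S (DepLbl.WR x) ∈ ConsEdges G →
      ¬(α (LEdge.mk T T' (DepLbl.WW x)) ∧ α (LEdge.mk T S (DepLbl.WR x))))

/-!
Every rule of the pruning system preserves the set of acyclic compatible graphs, once the
terminal state `S#` is read as "not SER-acyclic". An eliminated edge `e` can lie in no acyclic
compatible graph `E'`: together with `E ⊆ E'` it would force its derived RW edges into `E'` and
hence the cycle that licensed the elimination. Dually, an introduced edge lies in every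
compatible graph, and so do its derived RW edges.
-/

section Pruning

variable {V Key : Type}

lemma EdgeCyclic.mono {L : Type} {E F : Set (LEdge V L)} (h : E ⊆ F) (hE : EdgeCyclic E) :
    EdgeCyclic F :=
  hE.imp fun _ => Relation.TransGen.mono (fun _ _ => Exists.imp fun _ he => h he) _ _

lemma forall_mem_diff_union_singleton_iff {α : Type*} {A : Set α} {a b : α} {p : α → Prop}
    (ha : a ∈ A) (hab : p b ↔ p a) :
    (∀ c ∈ A \ {a} ∪ {b}, p c) ↔ ∀ c ∈ A, p c := by
  refine ⟨fun h c hc => ?_, fun h c hc => ?_⟩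
  · obtain rfl | hca := eq_or_ne c a
    · exact hab.1 (h b (Or.inr rfl))
    · exact h c (Or.inl ⟨hc, hca⟩)
  · rcases hc with ⟨hc, -⟩ | rfl
    · exact h c hc
    · exact hab.2 (h a ha)

lemma forall_mem_diff_singleton_iff {α : Type*} {A : Set α} {a : α} {p : α → Prop}
    (hpa : p a) :
    (∀ c ∈ A \ {a}, p c) ↔ ∀ c ∈ A, p c :=
  ⟨fun h c hc => (eq_or_ne c a).elim (· ▸ hpa) fun hca => h c ⟨hc, hca⟩,
    fun h c hc => h c hc.1⟩

lemma existsUnique_mem_inter_diff_singleton_iff {α : Type*} {s C : Set α} {e : α}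
    (he : e ∉ s) :
    (∃! f, f ∈ s ∧ f ∈ C \ {e}) ↔ ∃! f, f ∈ s ∧ f ∈ C :=
  existsUnique_congr fun _ =>
    ⟨fun h => ⟨h.1, h.2.1⟩, fun h => ⟨h.1, h.2, fun hfe => he (hfe ▸ h.1)⟩⟩

lemma existsUnique_mem_inter_singleton_iff {α : Type*} {s : Set α} {e : α} :
    (∃! f, f ∈ s ∧ f ∈ ({e} : Set α)) ↔ e ∈ s :=
  ⟨fun ⟨_, ⟨hf, rfl⟩, _⟩ => hf, fun he => ⟨e, ⟨he, rfl⟩, fun _ h => h.2⟩⟩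

def RWClosed (E' : DepEdgeSet V Key) : Prop :=
  ∀ (x : Key) (T T' S : V), T ≠ S →
    LEdge.mk T' T (DepLbl.WR x) ∈ E' → LEdge.mk T' S (DepLbl.WW x) ∈ E' →
    LEdge.mk T S (DepLbl.RW x) ∈ E'

lemma compatible_mk_iff {E E' : DepEdgeSet V Key} {CWW CWR : Set (DepEdgeSet V Key)} :
    Compatible ⟨E, CWW, CWR⟩ E' ↔ E ⊆ E' ∧ RWClosed E' ∧
      (∀ C ∈ CWW, ∃! e, e ∈ E' ∧ e ∈ C) ∧ ∀ C ∈ CWR, ∃! e, e ∈ E' ∧ e ∈ C :=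
  and_congr_right' (and_congr_right' forall₂_or_left)

lemma derivedRWofWW_subset {E E' : DepEdgeSet V Key} {T T' : V} {x : Key}
    (hE : E ⊆ E') (hclo : RWClosed E') (he : LEdge.mk T T' (DepLbl.WW x) ∈ E') :
    DerivedRWofWW E T T' x ⊆ E' := by
  rintro _ ⟨S, hwr, hne, rfl⟩
  exact hclo x S T T' hne (hE hwr) he

lemma derivedRWofWR_subset {E E' : DepEdgeSet V Key} {T S : V} {x : Key}
    (hE : E ⊆ E') (hclo : RWClosed E') (he : LEdge.mk T S (DepLbl.WR x) ∈ E') :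
    DerivedRWofWR E T S x ⊆ E' := by
  rintro _ ⟨T', hww, hne, rfl⟩
  exact hclo x S T T' hne he (hE hww)

lemma union_singleton_union_subset_iff {α : Type*} {E D E' : Set α} {e : α}
    (he : e ∈ E') (hD : E ⊆ E' → D ⊆ E') :
    E ∪ {e} ∪ D ⊆ E' ↔ E ⊆ E' :=
  ⟨fun h => (Set.subset_union_left.trans Set.subset_union_left).trans h,
    fun h => Set.union_subset (Set.union_subset h (Set.singleton_subset_iff.2 he)) (hD h)⟩

lemma not_mem_of_edgeCyclic_union {L : Type} {E D E' : Set (LEdge V L)} {e : LEdge V L}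
    (hacyc : ¬ EdgeCyclic E') (hE : E ⊆ E') (hD : e ∈ E' → D ⊆ E')
    (hcyc : EdgeCyclic (E ∪ {e} ∪ D)) :
    e ∉ E' := fun he =>
  hacyc (hcyc.mono ((union_singleton_union_subset_iff he fun _ => hD he).2 hE))

def PState.SERAcyclic : PState V Key → Prop
  | .node E CWW CWR => DBIso.SERAcyclic ⟨E, CWW, CWR⟩
  | .bad => False

lemma not_serAcyclic_of_empty_mem {G : HyperPolygraph V Key} (h : ∅ ∈ G.CWW ∪ G.CWR) :
    ¬ SERAcyclic G := by
  rintro ⟨E', ⟨-, -, hC⟩, -⟩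
  obtain ⟨_, ⟨-, hmem⟩, -⟩ := hC ∅ h
  exact hmem

lemma not_serAcyclic_of_edgeCyclic {G : HyperPolygraph V Key} (h : EdgeCyclic G.E) :
    ¬ SERAcyclic G := by
  rintro ⟨E', ⟨hE, -⟩, hacyc⟩
  exact hacyc (h.mono hE)

lemma PruneStep.compatible_iff {E Ep : DepEdgeSet V Key} {C1 C2 P1 P2 : Set (DepEdgeSet V Key)}
    (h : PruneStep (.node E C1 C2) (.node Ep P1 P2)) {E' : DepEdgeSet V Key}
    (hacyc : ¬ EdgeCyclic E') :
    Compatible ⟨E, C1, C2⟩ E' ↔ Compatible ⟨Ep, P1, P2⟩ E' := by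
  rw [compatible_mk_iff, compatible_mk_iff]
  cases h with
  | wwElim hc _ hcyc =>
    refine and_congr_right fun hE => and_congr_right fun hclo => and_congr_left' ?_
    have he := not_mem_of_edgeCyclic_union hacyc hE (derivedRWofWW_subset hE hclo) hcyc
    exact (forall_mem_diff_union_singleton_iff hc
      (existsUnique_mem_inter_diff_singleton_iff he)).symm
  | wrElim hc _ hcyc =>
    refine and_congr_right fun hE => and_congr_right fun hclo => and_congr_right' ?_
    have he := not_mem_of_edgeCyclic_union hacyc hE (derivedRWofWR_subset hE hclo) hcyc
    exact (forall_mem_diff_union_singleton_iff hc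
      (existsUnique_mem_inter_diff_singleton_iff he)).symm
  | wwIntro hc =>
    constructor
    · rintro ⟨hE, hclo, hC1, hC2⟩
      have he := existsUnique_mem_inter_singleton_iff.1 (hC1 _ hc)
      exact ⟨(union_singleton_union_subset_iff he (derivedRWofWW_subset · hclo he)).2 hE, hclo,
        fun C hC => hC1 C hC.1, hC2⟩
    · rintro ⟨hE, hclo, hC1, hC2⟩
      have he := hE (Or.inl (Or.inr rfl))
      refine ⟨(union_singleton_union_subset_iff he (derivedRWofWW_subset · hclo he)).1 hE, hclo,
        (forall_mem_diff_singleton_iff ?_).1 hC1, hC2⟩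
      exact existsUnique_mem_inter_singleton_iff.2 he
  | wrIntro hc =>
    constructor
    · rintro ⟨hE, hclo, hC1, hC2⟩
      have he := existsUnique_mem_inter_singleton_iff.1 (hC2 _ hc)
      exact ⟨(union_singleton_union_subset_iff he (derivedRWofWR_subset · hclo he)).2 hE, hclo,
        hC1, fun C hC => hC2 C hC.1⟩
    · rintro ⟨hE, hclo, hC1, hC2⟩
      have he := hE (Or.inl (Or.inr rfl))
      refine ⟨(union_singleton_union_subset_iff he (derivedRWofWR_subset · hclo he)).1 hE, hclo,
        hC1, (forall_mem_diff_singleton_iff ?_).1 hC2⟩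
      exact existsUnique_mem_inter_singleton_iff.2 he

lemma PruneStep.serAcyclic_iff {s t : PState V Key} (h : PruneStep s t) :
    s.SERAcyclic ↔ t.SERAcyclic := by
  cases t with
  | bad =>
    cases h with
    | noChoice h => exact iff_false_intro (not_serAcyclic_of_empty_mem h)
    | cyc h => exact iff_false_intro (not_serAcyclic_of_edgeCyclic h)
  | node =>
    cases s with
    | bad => cases h
    | node => exact exists_congr fun _ => and_congr_left (h.compatible_iff ·)

lemma PState.serAcyclic_iff_of_reflTransGen {s t : PState V Key}
    (h : Relation.ReflTransGen PruneStep s t) : s.SERAcyclic ↔ t.SERAcyclic := by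
  induction h with
  | refl => rfl
  | tail _ hstep ih => exact ih.trans hstep.serAcyclic_iff

end Pruning

theorem prune_preserves_serAcyclic_general (V Key : Type)
    (E Ep : DepEdgeSet V Key) (CWW CWR CWWp CWRp : Set (DepEdgeSet V Key))
    (h : Relation.ReflTransGen PruneStep
      (PState.node E CWW CWR) (PState.node Ep CWWp CWRp)) :
    SERAcyclic ⟨E, CWW, CWR⟩ ↔ SERAcyclic ⟨Ep, CWWp, CWRp⟩ :=
  PState.serAcyclic_iff_of_reflTransGen h

/-- Pruning preserves SER-acyclicity: if `⟨E, C^WW, C^WR⟩ ↪* ⟨E_p, C^WW_p, C^WR_p⟩`,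
then `(V, E, (C^WW, C^WR))` is SER-acyclic iff `(V, E_p, (C^WW_p, C^WR_p))` is. -/
theorem prune_preserves_serAcyclic (V Key : Type) [Finite V]
    (E Ep : DepEdgeSet V Key) (CWW CWR CWWp CWRp : Set (DepEdgeSet V Key))
    (hfin : ∀ C ∈ CWW ∪ CWR, C.Finite)
    (h : Relation.ReflTransGen PruneStep
      (PState.node E CWW CWR) (PState.node Ep CWWp CWRp)) :
    SERAcyclic ⟨E, CWW, CWR⟩ ↔ SERAcyclic ⟨Ep, CWWp, CWRp⟩ :=
  prune_preserves_serAcyclic_general V Key E Ep CWW CWR CWWp CWRp h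

end DBIso
end

section
/- Over a fixed finite vertex set V, if ⟨E, C^WW, C^WR⟩ ↪* S# in the pruning transition system, then the hyper-polygraph (V, E, (C^WW, C^WR)) is not SER-acyclic. -/
namespace DBIso

variable {Key Val : Type}

variable {V L : Type}

/-! An acyclic graph `E'` compatible with a state remains compatible with every successor
state.
An Elim step discards an edge whose presence would close a cycle in `E'`; so the edge is not in
`E'`, and the shrunken constraint still meets `E'` in exactly one edge. An Intro step adds an edge
that a singleton constraint forces into `E'`, together with RW edges that compatibility forces
into `E'` as well. The terminal state `S#` admits no such graph. -/

lemma edgeCyclic_mono {E F : Set (LEdge V L)} (h : E ⊆ F) (hE : EdgeCyclic E) :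
    EdgeCyclic F := by
  obtain ⟨a, ha⟩ := hE
  exact ⟨a, Relation.TransGen.mono (fun _ _ ⟨l, hl⟩ => ⟨l, h hl⟩) a a ha⟩

lemma exists_inter_eq_of_sdiff_singleton {α : Type*} {A : Set α} {𝒞 𝒟 : Set (Set α)}
    {C₁ : Set α} {e : α} (he : e ∉ A) (hC₁ : C₁ ∈ 𝒞)
    (h𝒞 : ∀ C ∈ 𝒞, ∃ D ∈ 𝒟, C ∩ A = D ∩ A) :
    ∀ C ∈ (𝒞 \ {C₁}) ∪ {C₁ \ {e}}, ∃ D ∈ 𝒟, C ∩ A = D ∩ A := by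
  rintro C (hC | rfl)
  · exact h𝒞 C hC.1
  · rw [Set.sdiff_inter_right_comm, Set.sdiff_singleton_eq_self fun h => he h.2]
    exact h𝒞 C₁ hC₁

namespace Compatible

variable {G : HyperPolygraph V Key} {E' : DepEdgeSet V Key}

lemma union_derivedRWofWW_subset (hG : Compatible G E') {T T' : V} {x : Key}
    (he : LEdge.mk T T' (DepLbl.WW x) ∈ E') :
    G.E ∪ {LEdge.mk T T' (DepLbl.WW x)} ∪ DerivedRWofWW G.E T T' x ⊆ E' := by
  refine Set.union_subset (Set.union_subset hG.1 (Set.singleton_subset_iff.2 he)) ?_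
  rintro _ ⟨S, hWR, hne, rfl⟩
  exact hG.2.1 x S T T' hne (hG.1 hWR) he

lemma union_derivedRWofWR_subset (hG : Compatible G E') {T S : V} {x : Key}
    (he : LEdge.mk T S (DepLbl.WR x) ∈ E') :
    G.E ∪ {LEdge.mk T S (DepLbl.WR x)} ∪ DerivedRWofWR G.E T S x ⊆ E' := by
  refine Set.union_subset (Set.union_subset hG.1 (Set.singleton_subset_iff.2 he)) ?_
  rintro _ ⟨T', hWW, hne, rfl⟩
  exact hG.2.1 x S T T' hne he (hG.1 hWW)

lemma mem_of_singleton_mem (hG : Compatible G E') {e : DepEdge V Key}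
    (he : {e} ∈ G.CWW ∪ G.CWR) : e ∈ E' := by
  obtain ⟨f, ⟨hf, rfl⟩, -⟩ := hG.2.2 _ he
  exact hf

lemma empty_notMem (hG : Compatible G E') : ∅ ∉ G.CWW ∪ G.CWR := fun h => by
  obtain ⟨_, ⟨-, h⟩, -⟩ := hG.2.2 _ h
  exact h

lemma of_inter_eq (hG : Compatible G E') {F : DepEdgeSet V Key}
    {CWW CWR : Set (DepEdgeSet V Key)} (hF : F ⊆ E')
    (hC : ∀ C ∈ CWW ∪ CWR, ∃ C₀ ∈ G.CWW ∪ G.CWR, C ∩ E' = C₀ ∩ E') :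
    Compatible ⟨F, CWW, CWR⟩ E' := by
  refine ⟨hF, hG.2.1, fun C hCmem => ?_⟩
  obtain ⟨C₀, hC₀, htrace⟩ := hC C hCmem
  have hiff (f : DepEdge V Key) : f ∈ E' ∧ f ∈ C ↔ f ∈ E' ∧ f ∈ C₀ := by
    simpa only [Set.mem_inter_iff, and_comm] using Set.ext_iff.1 htrace f
  simpa only [hiff] using hG.2.2 C₀ hC₀

end Compatible

def PState.AcyclicCompatible (E' : DepEdgeSet V Key) : PState V Key → Prop
  | .node E CWW CWR => Compatible ⟨E, CWW, CWR⟩ E' ∧ ¬ EdgeCyclic E'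
  | .bad => False

lemma PruneStep.acyclicCompatible {s t : PState V Key} (hst : PruneStep s t)
    {E' : DepEdgeSet V Key} (hs : s.AcyclicCompatible E') : t.AcyclicCompatible E' := by
  rcases s with ⟨E, CWW, CWR⟩ | _
  swap
  · exact hs.elim
  obtain ⟨hG, hacyc⟩ := hs
  cases hst with
  | noChoice h => exact hG.empty_notMem h
  | cyc h => exact hacyc (edgeCyclic_mono hG.1 h)
  | wwElim hc _ hcyc =>
    have hout := fun hin => hacyc (edgeCyclic_mono (hG.union_derivedRWofWW_subset hin) hcyc)
    refine ⟨hG.of_inter_eq hG.1 ?_, hacyc⟩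
    rintro C (hC | hC)
    · exact exists_inter_eq_of_sdiff_singleton hout hc (fun C hC => ⟨C, Or.inl hC, rfl⟩) C hC
    · exact ⟨C, Or.inr hC, rfl⟩
  | wrElim hc _ hcyc =>
    have hout := fun hin => hacyc (edgeCyclic_mono (hG.union_derivedRWofWR_subset hin) hcyc)
    refine ⟨hG.of_inter_eq hG.1 ?_, hacyc⟩
    rintro C (hC | hC)
    · exact ⟨C, Or.inl hC, rfl⟩
    · exact exists_inter_eq_of_sdiff_singleton hout hc (fun C hC => ⟨C, Or.inr hC, rfl⟩) C hC
  | wwIntro hc =>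
    have hin := hG.mem_of_singleton_mem (Or.inl hc)
    refine ⟨hG.of_inter_eq (hG.union_derivedRWofWW_subset hin) ?_, hacyc⟩
    exact fun C hC => ⟨C, Set.union_subset_union_left _ Set.sdiff_subset hC, rfl⟩
  | wrIntro hc =>
    have hin := hG.mem_of_singleton_mem (Or.inr hc)
    refine ⟨hG.of_inter_eq (hG.union_derivedRWofWR_subset hin) ?_, hacyc⟩
    exact fun C hC => ⟨C, Set.union_subset_union_right _ Set.sdiff_subset hC, rfl⟩

lemma PState.AcyclicCompatible.of_reflTransGen {s t : PState V Key}
    (h : Relation.ReflTransGen PruneStep s t) {E' : DepEdgeSet V Key}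
    (hs : s.AcyclicCompatible E') : t.AcyclicCompatible E' := by
  induction h with
  | refl => exact hs
  | tail _ hst ih => exact hst.acyclicCompatible ih

theorem prune_to_bad_not_serAcyclic_general (V Key : Type)
    (E : DepEdgeSet V Key) (CWW CWR : Set (DepEdgeSet V Key))
    (h : Relation.ReflTransGen PruneStep (PState.node E CWW CWR) PState.bad) :
    ¬ SERAcyclic ⟨E, CWW, CWR⟩ := by
  rintro ⟨E', hG, hacyc⟩
  exact PState.AcyclicCompatible.of_reflTransGen h ⟨hG, hacyc⟩

/-- If `⟨E, C^WW, C^WR⟩ ↪* S#`, then the hyper-polygraph `(V, E, (C^WW, C^WR))` is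
not SER-acyclic. -/
theorem prune_to_bad_not_serAcyclic (V Key : Type) [Finite V]
    (E : DepEdgeSet V Key) (CWW CWR : Set (DepEdgeSet V Key))
    (hfin : ∀ C ∈ CWW ∪ CWR, C.Finite)
    (h : Relation.ReflTransGen PruneStep (PState.node E CWW CWR) PState.bad) :
    ¬ SERAcyclic ⟨E, CWW, CWR⟩ :=
  prune_to_bad_not_serAcyclic_general V Key E CWW CWR h

end DBIso
end

section
/- Let G = (V, E, (C^WW, C^WR)) be a hyper-polygraph such that the singleton {e} is a constraint in C^WW, where e = (T,T',WW,x). Then G and the hyper-polygraph (V, E ∪ {e} ∪ {(S,T',RW,x) : (T,S,WR,x) ∈ E, S ≠ T'}, (C^WW ∖ {{e}}, C^WR)) have exactly the same compatible directed labeled graphs, and in particular the same acyclic compatible graphs. -/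
namespace DBIso

variable {Key Val : Type}

variable {V L : Type}

/-- WW-Intro preserves the compatible graphs (and in particular the acyclic ones). -/
theorem wwIntro_same_compatible (V Key : Type) [Finite V]
    (G : HyperPolygraph V Key) (hfin : ∀ C ∈ G.CWW ∪ G.CWR, C.Finite)
    (T T' : V) (x : Key)
    (hc : ({LEdge.mk T T' (DepLbl.WW x)} : DepEdgeSet V Key) ∈ G.CWW) :
    (∀ E' : DepEdgeSet V Key,
      Compatible G E' ↔
      Compatible
        ⟨G.E ∪ {LEdge.mk T T' (DepLbl.WW x)} ∪ DerivedRWofWW G.E T T' x,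
          G.CWW \ {{LEdge.mk T T' (DepLbl.WW x)}}, G.CWR⟩ E') ∧
    (∀ E' : DepEdgeSet V Key,
      (Compatible G E' ∧ ¬ EdgeCyclic E') ↔
      (Compatible
          ⟨G.E ∪ {LEdge.mk T T' (DepLbl.WW x)} ∪ DerivedRWofWW G.E T T' x,
            G.CWW \ {{LEdge.mk T T' (DepLbl.WW x)}}, G.CWR⟩ E' ∧
        ¬ EdgeCyclic E')) := by
  have main : ∀ E' : DepEdgeSet V Key,
      Compatible G E' ↔
      Compatible
        ⟨G.E ∪ {LEdge.mk T T' (DepLbl.WW x)} ∪ DerivedRWofWW G.E T T' x,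
          G.CWW \ {{LEdge.mk T T' (DepLbl.WW x)}}, G.CWR⟩ E' := by
    intro E'
    constructor
    · rintro ⟨hsub, hcl, huniq⟩
      have he : LEdge.mk T T' (DepLbl.WW x) ∈ E' := by
        obtain ⟨e, ⟨heE, heC⟩, _⟩ := huniq _ (Or.inl hc)
        rw [Set.mem_singleton_iff] at heC
        rwa [heC] at heE
      refine ⟨?_, hcl, ?_⟩
      · intro e hmem
        rcases hmem with (hmem | hmem) | hmem
        · exact hsub hmem
        · rw [Set.mem_singleton_iff] at hmem; rwa [hmem]
        · obtain ⟨S, hwr, hST', rfl⟩ := hmem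
          exact hcl x S T T' hST' (hsub hwr) he
      · intro C hC
        exact huniq C (by rcases hC with hC | hC
                          · exact Or.inl hC.1
                          · exact Or.inr hC)
    · rintro ⟨hsub, hcl, huniq⟩
      refine ⟨fun e hmem => hsub (Or.inl (Or.inl hmem)), hcl, ?_⟩
      intro C hC
      by_cases hCe : C = ({LEdge.mk T T' (DepLbl.WW x)} : DepEdgeSet V Key)
      · subst hCe
        refine ⟨LEdge.mk T T' (DepLbl.WW x), ⟨hsub (Or.inl (Or.inr rfl)), rfl⟩, ?_⟩
        rintro e ⟨_, he⟩
        exact he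
      · refine huniq C ?_
        rcases hC with hC | hC
        · exact Or.inl ⟨hC, hCe⟩
        · exact Or.inr hC
  exact ⟨main, fun E' => by rw [main E']⟩

end DBIso
end

section
/- Let G = (V, E, (C^WW, C^WR)) be a hyper-polygraph such that the singleton {e} is a constraint in C^WR, where e = (T,S,WR,x). Then G and the hyper-polygraph (V, E ∪ {e} ∪ {(S,T',RW,x) : (T,T',WW,x) ∈ E, S ≠ T'}, (C^WW, C^WR ∖ {{e}})) have exactly the same compatible directed labeled graphs, and in particular the same acyclic compatible graphs. -/
namespace DBIso

variable {Key Val : Type}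

variable {V L : Type}

/-- WR-Intro preserves the compatible graphs (and in particular the acyclic ones). -/
theorem wrIntro_same_compatible (V Key : Type) [Finite V]
    (G : HyperPolygraph V Key) (hfin : ∀ C ∈ G.CWW ∪ G.CWR, C.Finite)
    (T S : V) (x : Key)
    (hc : ({LEdge.mk T S (DepLbl.WR x)} : DepEdgeSet V Key) ∈ G.CWR) :
    (∀ E' : DepEdgeSet V Key,
      Compatible G E' ↔
      Compatible
        ⟨G.E ∪ {LEdge.mk T S (DepLbl.WR x)} ∪ DerivedRWofWR G.E T S x,
          G.CWW, G.CWR \ {{LEdge.mk T S (DepLbl.WR x)}}⟩ E') ∧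
    (∀ E' : DepEdgeSet V Key,
      (Compatible G E' ∧ ¬ EdgeCyclic E') ↔
      (Compatible
          ⟨G.E ∪ {LEdge.mk T S (DepLbl.WR x)} ∪ DerivedRWofWR G.E T S x,
            G.CWW, G.CWR \ {{LEdge.mk T S (DepLbl.WR x)}}⟩ E' ∧
        ¬ EdgeCyclic E')) := by
  have h1 : ∀ E' : DepEdgeSet V Key,
      Compatible G E' ↔
      Compatible
        ⟨G.E ∪ {LEdge.mk T S (DepLbl.WR x)} ∪ DerivedRWofWR G.E T S x,
          G.CWW, G.CWR \ {{LEdge.mk T S (DepLbl.WR x)}}⟩ E' := by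
    intro E'
    constructor
    · rintro ⟨hE, hrw, hcons⟩
      have he : LEdge.mk T S (DepLbl.WR x) ∈ E' := by
        obtain ⟨e, ⟨heE, heC⟩, -⟩ := hcons _ (Or.inr hc)
        rw [Set.mem_singleton_iff] at heC; subst heC; exact heE
      refine ⟨?_, hrw, ?_⟩
      · rintro e (he' | he')
        · rcases he' with he' | he'
          · exact hE he'
          · rw [Set.mem_singleton_iff] at he'; subst he'; exact he
        · obtain ⟨T', hww, hne, rfl⟩ := he'
          exact hrw x S T T' hne he (hE hww)
      · intro C hC
        apply hcons
        rcases hC with hC | hC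
        · exact Or.inl hC
        · exact Or.inr hC.1
    · rintro ⟨hE, hrw, hcons⟩
      have hsub : G.E ⊆ E' := fun e he => hE (Or.inl (Or.inl he))
      refine ⟨hsub, hrw, ?_⟩
      intro C hC
      rcases hC with hC | hC
      · exact hcons C (Or.inl hC)
      · by_cases hCe : C = {LEdge.mk T S (DepLbl.WR x)}
        · subst hCe
          refine ⟨LEdge.mk T S (DepLbl.WR x), ⟨hE (Or.inl (Or.inr rfl)), rfl⟩, ?_⟩
          rintro e ⟨-, he⟩; exact he
        · exact hcons C (Or.inr ⟨hC, hCe⟩)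
  exact ⟨h1, fun E' => and_congr_left' (h1 E')⟩

end DBIso
end

section
/- Over a fixed finite vertex set V, every transition sequence s₀ ↪ s₁ ↪ s₂ ↪ ⋯ of the pruning transition system starting from a state ⟨E, C^WW, C^WR⟩ in which C^WW and C^WR are finite collections of finite sets is finite; that is, the pruning transition relation ↪ is terminating from such states. -/
namespace DBIso

variable {Key Val : Type}

variable {V L : Type}

/-! Every step that does not lead to `S#` either deletes a constraint or deletes one edge
from a finite constraint, so `∑_{C ∈ C^WW} (|C| + 1) + ∑_{C ∈ C^WR} (|C| + 1)` strictly
decreases, while `S#` has no successor. Since the collections are sets, a shrunken constraint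
may coincide with one already present; this only makes the sum drop further. -/

section SizeSum

variable {α : Type*}

def IsFiniteFamily (𝒞 : Set (Set α)) : Prop := 𝒞.Finite ∧ ∀ C ∈ 𝒞, C.Finite

theorem IsFiniteFamily.sdiff_singleton {𝒞 : Set (Set α)} (h : IsFiniteFamily 𝒞) (C : Set α) :
    IsFiniteFamily (𝒞 \ {C}) :=
  ⟨h.1.sdiff, fun D hD => h.2 D hD.1⟩

theorem IsFiniteFamily.replace {𝒞 : Set (Set α)} (h : IsFiniteFamily 𝒞) {C : Set α}
    (hC : C ∈ 𝒞) (e : α) : IsFiniteFamily (𝒞 \ {C} ∪ {C \ {e}}) := by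
  refine ⟨h.1.sdiff.union (Set.finite_singleton _), ?_⟩
  rintro D (hD | rfl)
  · exact h.2 D hD.1
  · exact (h.2 C hC).sdiff

noncomputable def sizeSum (𝒞 : Set (Set α)) : ℕ := ∑ᶠ C ∈ 𝒞, (C.ncard + 1)

theorem sizeSum_eq_add_sizeSum_sdiff_singleton {𝒞 : Set (Set α)} (h𝒞 : 𝒞.Finite) {C : Set α}
    (hC : C ∈ 𝒞) : sizeSum 𝒞 = C.ncard + 1 + sizeSum (𝒞 \ {C}) := by
  unfold sizeSum
  conv_lhs => rw [← Set.insert_eq_of_mem hC, ← Set.insert_sdiff_singleton]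
  exact finsum_mem_insert _ (fun h => h.2 rfl) h𝒞.sdiff

theorem sizeSum_union_le {𝒜 ℬ : Set (Set α)} (h𝒜 : 𝒜.Finite) (hℬ : ℬ.Finite) :
    sizeSum (𝒜 ∪ ℬ) ≤ sizeSum 𝒜 + sizeSum ℬ := by
  have := finsum_mem_union_inter (f := fun C : Set α => C.ncard + 1) h𝒜 hℬ
  unfold sizeSum
  omega

theorem sizeSum_sdiff_singleton_lt {𝒞 : Set (Set α)} (h𝒞 : 𝒞.Finite) {C : Set α}
    (hC : C ∈ 𝒞) : sizeSum (𝒞 \ {C}) < sizeSum 𝒞 := by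
  rw [sizeSum_eq_add_sizeSum_sdiff_singleton h𝒞 hC]
  omega

theorem sizeSum_replace_lt {𝒞 : Set (Set α)} (h𝒞 : IsFiniteFamily 𝒞) {C : Set α}
    (hC : C ∈ 𝒞) {e : α} (he : e ∈ C) : sizeSum (𝒞 \ {C} ∪ {C \ {e}}) < sizeSum 𝒞 := by
  have hlt := Set.ncard_sdiff_singleton_lt_of_mem he (h𝒞.2 C hC)
  calc sizeSum (𝒞 \ {C} ∪ {C \ {e}})
      ≤ sizeSum (𝒞 \ {C}) + ((C \ {e}).ncard + 1) := by
        simpa only [sizeSum, finsum_mem_singleton] using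
          sizeSum_union_le h𝒞.1.sdiff (Set.finite_singleton (C \ {e}))
    _ < C.ncard + 1 + sizeSum (𝒞 \ {C}) := by omega
    _ = sizeSum 𝒞 := (sizeSum_eq_add_sizeSum_sdiff_singleton h𝒞.1 hC).symm

end SizeSum

theorem not_exists_chain_of_weight_lt {α : Type*} {r : α → α → Prop} (P : α → Prop)
    (w : α → ℕ) (hstep : ∀ a b, P a → r a b → w b < w a ∧ P b) {a : α} (ha : P a) :
    ¬ ∃ f : ℕ → α, f 0 = a ∧ ∀ n, r (f n) (f (n + 1)) := by
  rintro ⟨f, rfl, hf⟩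
  have hP : ∀ n, P (f n) := fun n => Nat.rec ha (fun n ih => (hstep _ _ ih (hf n)).2) n
  obtain ⟨n, hn⟩ := WellFounded.not_rel_apply_succ (r := (· < ·)) (w ∘ f)
  exact hn (hstep _ _ (hP n) (hf n)).1

namespace PState

def FiniteConstraints : PState V Key → Prop
  | node _ CWW CWR => IsFiniteFamily CWW ∧ IsFiniteFamily CWR
  | bad => True

noncomputable def weight : PState V Key → ℕ
  | node _ CWW CWR => sizeSum CWW + sizeSum CWR + 1
  | bad => 0

end PState

theorem PruneStep.weight_lt_and_finiteConstraints {s t : PState V Key} (h : PruneStep s t)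
    (hs : s.FiniteConstraints) : t.weight < s.weight ∧ t.FiniteConstraints := by
  cases s with
  | bad => cases h
  | node _ CWW CWR =>
    obtain ⟨hWW, hWR⟩ := hs
    cases h with
    | noChoice _ | cyc _ => exact ⟨Nat.succ_pos _, trivial⟩
    | wwElim hc he _ =>
      have := sizeSum_replace_lt hWW hc he
      exact ⟨by simp only [PState.weight]; omega, hWW.replace hc _, hWR⟩
    | wrElim hc he _ =>
      have := sizeSum_replace_lt hWR hc he
      exact ⟨by simp only [PState.weight]; omega, hWW, hWR.replace hc _⟩
    | wwIntro hc =>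
      have := sizeSum_sdiff_singleton_lt hWW.1 hc
      exact ⟨by simp only [PState.weight]; omega, hWW.sdiff_singleton _, hWR⟩
    | wrIntro hc =>
      have := sizeSum_sdiff_singleton_lt hWR.1 hc
      exact ⟨by simp only [PState.weight]; omega, hWW, hWR.sdiff_singleton _⟩

theorem pruneStep_terminating_general (V Key : Type)
    (E : DepEdgeSet V Key) (CWW CWR : Set (DepEdgeSet V Key))
    (hWW : CWW.Finite) (hWR : CWR.Finite)
    (hWWfin : ∀ C ∈ CWW, C.Finite) (hWRfin : ∀ C ∈ CWR, C.Finite) :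
    ¬ ∃ f : ℕ → PState V Key,
        f 0 = PState.node E CWW CWR ∧ ∀ n, PruneStep (f n) (f (n + 1)) :=
  not_exists_chain_of_weight_lt PState.FiniteConstraints PState.weight
    (fun _ _ hs h => h.weight_lt_and_finiteConstraints hs) ⟨⟨hWW, hWWfin⟩, hWR, hWRfin⟩

/-- The pruning transition system is terminating from states whose constraint
collections are finite collections of finite sets: there is no infinite transition
sequence starting from such a state. -/
theorem pruneStep_terminating (V Key : Type) [Finite V]
    (E : DepEdgeSet V Key) (CWW CWR : Set (DepEdgeSet V Key))
    (hWW : CWW.Finite) (hWR : CWR.Finite)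
    (hWWfin : ∀ C ∈ CWW, C.Finite) (hWRfin : ∀ C ∈ CWR, C.Finite) :
    ¬ ∃ f : ℕ → PState V Key,
        f 0 = PState.node E CWW CWR ∧ ∀ n, PruneStep (f n) (f (n + 1)) :=
  pruneStep_terminating_general V Key E CWW CWR hWW hWR hWWfin hWRfin

end DBIso
end

section
/- Let G = (V, E, (C^WW, C^WR)) be a hyper-polygraph, x a key, and T, T', S ∈ V with T' ≠ T, T' ≠ S, and T' ⤳ S in (V, E). Then no acyclic directed labeled graph compatible with G contains both the edge (T,S,WR,x) and the edge (T,T',WW,x). -/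
namespace DBIso

variable {Key Val : Type}

variable {V L : Type}

theorem EReach.mono {E E' : Set (LEdge V L)} (h : E ⊆ E') {a b : V} (hab : EReach E a b) :
    EReach E' a b :=
  Relation.ReflTransGen.mono (fun _ _ ⟨l, hl⟩ => ⟨l, h hl⟩) _ _ hab

theorem EReach.edgeCyclic_of_mem {E : Set (LEdge V L)} {a b : V} (hab : EReach E a b)
    {l : L} (hba : LEdge.mk b a l ∈ E) : EdgeCyclic E :=
  ⟨a, Relation.TransGen.tail' hab ⟨l, hba⟩⟩

/-- The derived edge `(S,T',RW,x)` closes the known path `T' ⤳ S` into a cycle. -/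
theorem Compatible.edgeCyclic_of_wr_of_ww {G : HyperPolygraph V Key} {E' : DepEdgeSet V Key}
    (hG : Compatible G E') {x : Key} {T T' S : V} (hne : T' ≠ S) (hreach : EReach G.E T' S)
    (hwr : LEdge.mk T S (DepLbl.WR x) ∈ E') (hww : LEdge.mk T T' (DepLbl.WW x) ∈ E') :
    EdgeCyclic E' :=
  (hreach.mono hG.1).edgeCyclic_of_mem (hG.2.1 x S T T' hne.symm hwr hww)

theorem no_derived_rw_two_width_cycle_general (V Key : Type)
    (G : HyperPolygraph V Key)
    (x : Key) (T T' S : V) (h2 : T' ≠ S) (h3 : EReach G.E T' S) :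
    ∀ E' : DepEdgeSet V Key, Compatible G E' → ¬ EdgeCyclic E' →
      ¬ (LEdge.mk T S (DepLbl.WR x) ∈ E' ∧ LEdge.mk T T' (DepLbl.WW x) ∈ E') :=
  fun _ hG hacyc ⟨hwr, hww⟩ => hacyc (hG.edgeCyclic_of_wr_of_ww h2 h3 hwr hww)

/-- Derived-RW 2-width cycles: if `T' ≠ T`, `T' ≠ S` and `T' ⤳ S` in the known graph,
no acyclic compatible graph contains both `(T,S,WR,x)` and `(T,T',WW,x)`. -/
theorem no_derived_rw_two_width_cycle (V Key : Type) [Finite V]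
    (G : HyperPolygraph V Key) (hfin : ∀ C ∈ G.CWW ∪ G.CWR, C.Finite)
    (x : Key) (T T' S : V) (h1 : T' ≠ T) (h2 : T' ≠ S) (h3 : EReach G.E T' S) :
    ∀ E' : DepEdgeSet V Key, Compatible G E' → ¬ EdgeCyclic E' →
      ¬ (LEdge.mk T S (DepLbl.WR x) ∈ E' ∧ LEdge.mk T T' (DepLbl.WW x) ∈ E') :=
  no_derived_rw_two_width_cycle_general V Key G x T T' S h2 h3

end DBIso
end
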